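/- arXiv:1506.02372 — 2 statements merged into one kernel-verified Lean document; each statement's English description precedes it below -/
import Mathlib

section
/- For s > 2, in long range percolation on ℤ with edge probabilities |i-j|^{-s}, almost surely there exist infinitely many cut-points in ℤ (both to the left and to the right of any given vertex). -/
/-!
The edges jumping over `k` are `(k - 1 - a, k + 1 + b)` for `a b : ℕ`; they are independent with
probabilities `(a + b + 2) ^ (-s)`, which are summable for `s > 2` and at most `1 / 2`. Since
`1 - x ≥ exp (-2 x)` on `[0, 1 / 2]`, every `k` is a cut-point with probability at least
`exp (-2 ∑ (a + b + 2) ^ (-s)) > 0`, uniformly in `k`. Hence the event that cut-points occur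
arbitrarily far to the right, the `limsup` of these events, has positive probability; it is a
tail event of the independent edge family, so by Kolmogorov's 0-1 law it has probability one.
The reflection `i ↦ -i` of `ℤ` turns this into the statement to the left.
-/

open MeasureTheory ProbabilityTheory Filter Set Real

theorem Real.exp_neg_two_mul_le_one_sub {x : ℝ} (hx₀ : 0 ≤ x) (hx : x ≤ 1 / 2) :
    exp (-2 * x) ≤ 1 - x := by
  rw [neg_mul, exp_neg, inv_le_iff_one_le_mul₀ (exp_pos _)]
  nlinarith [add_one_le_exp (2 * x)]

theorem Finset.exp_neg_two_mul_sum_le_prod_one_sub {ι : Type*} (u : Finset ι) {w : ι → ℝ}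
    (hw₀ : ∀ i, 0 ≤ w i) (hw : ∀ i, w i ≤ 1 / 2) :
    exp (-2 * ∑ i ∈ u, w i) ≤ ∏ i ∈ u, (1 - w i) := by
  rw [Finset.mul_sum, exp_sum]
  exact Finset.prod_le_prod (fun i _ => (exp_pos _).le)
    fun i _ => exp_neg_two_mul_le_one_sub (hw₀ i) (hw i)

theorem summable_rpow_neg_add_add_two {s : ℝ} (hs : 2 < s) :
    Summable fun ab : ℕ × ℕ => ((ab.1 : ℝ) + ab.2 + 2) ^ (-s) := by
  have h1 : Summable fun n : ℕ => ((n : ℝ) + 1) ^ (-(s / 2)) := by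
    exact_mod_cast (summable_nat_add_iff 1).2 (summable_nat_rpow.2 (by linarith))
  refine (h1.mul_of_nonneg h1 (fun _ => by positivity) fun _ => by positivity).of_nonneg_of_le
    (fun _ => by positivity) fun ⟨a, b⟩ => ?_
  have hsq : ((a : ℝ) + b + 2) ^ (-s) = (((a : ℝ) + b + 2) ^ 2) ^ (-(s / 2)) := by
    rw [← rpow_natCast, ← rpow_mul (by positivity)]; ring_nf
  rw [hsq, ← mul_rpow (by positivity) (by positivity)]
  exact rpow_le_rpow_of_nonpos (by positivity) (by nlinarith) (by linarith)

theorem rpow_neg_add_add_two_le_half {s : ℝ} (hs : 1 ≤ s) (a b : ℕ) :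
    ((a : ℝ) + b + 2) ^ (-s) ≤ 1 / 2 := by
  have h2 : (2 : ℝ) ≤ a + b + 2 := by linarith [a.cast_nonneg (α := ℝ), b.cast_nonneg (α := ℝ)]
  calc ((a : ℝ) + b + 2) ^ (-s) ≤ ((a : ℝ) + b + 2) ^ (-1 : ℝ) :=
        rpow_le_rpow_of_exponent_le (by linarith) (by linarith)
    _ ≤ 1 / 2 := by
        rw [rpow_neg_one, one_div]
        exact inv_anti₀ (by norm_num) h2

section Measure

variable {Ω ι : Type*} [MeasurableSpace Ω] {μ : Measure Ω}

theorem le_measure_iInter_of_forall_finset [Countable ι] [IsFiniteMeasure μ]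
    {B : ι → Set Ω} (hB : ∀ i, MeasurableSet (B i)) {c : ENNReal}
    (h : ∀ u : Finset ι, c ≤ μ (⋂ i ∈ u, B i)) : c ≤ μ (⋂ i, B i) := by
  have hanti : Antitone fun u : Finset ι => ⋂ i ∈ u, B i := fun u v huv =>
    biInter_subset_biInter_left huv
  rw [iInter_eq_iInter_finset, hanti.measure_iInter
    (fun u => (MeasurableSet.biInter u.countable_toSet fun i _ => hB i).nullMeasurableSet)
    ⟨∅, measure_ne_top _ _⟩]
  exact le_iInf h

theorem le_measure_limsup_atTop [Preorder ι] [IsDirectedOrder ι] [Nonempty ι] [Countable ι]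
    [IsFiniteMeasure μ] {A : ι → Set Ω} (hA : ∀ i, MeasurableSet (A i)) {c : ENNReal}
    (h : ∀ i, c ≤ μ (A i)) : c ≤ μ (limsup A atTop) := by
  have hlimsup : limsup A atTop = ⋂ i, ⋃ j ∈ Ici i, A j := by
    simp only [atTop_basis.limsup_eq_iInf_iSup, iInf_true]; rfl
  have hanti : Antitone fun i => ⋃ j ∈ Ici i, A j := fun i i' hii' =>
    biUnion_subset_biUnion_left (Ici_subset_Ici.2 hii')
  rw [hlimsup, hanti.measure_iInter
    (fun i => (MeasurableSet.biUnion (to_countable _) fun j _ => hA j).nullMeasurableSet)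
    ⟨Classical.arbitrary ι, measure_ne_top _ _⟩]
  exact le_iInf fun i => (h i).trans (measure_mono (subset_biUnion_of_mem (mem_Ici.2 le_rfl)))

namespace ProbabilityTheory

theorem iIndepSet.measure_biInter_compl {A : ι → Set Ω} (h : iIndepSet A μ) (u : Finset ι) :
    μ (⋂ i ∈ u, (A i)ᶜ) = ∏ i ∈ u, μ (A i)ᶜ :=
  ((iIndepSet_iff_iIndep A μ).1 h).meas_biInter fun _ _ =>
    (MeasurableSpace.measurableSet_generateFrom (mem_singleton _)).compl

theorem iIndepSet.ofReal_exp_le_measure_iInter_compl [Countable ι] {A : ι → Set Ω} {w : ι → ℝ}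
    (hA : ∀ i, MeasurableSet (A i)) (h : iIndepSet A μ)
    (hμ : ∀ i, μ (A i) = ENNReal.ofReal (w i)) (hw₀ : ∀ i, 0 ≤ w i) (hw : ∀ i, w i ≤ 1 / 2)
    (hsum : Summable w) : ENNReal.ofReal (exp (-2 * ∑' i, w i)) ≤ μ (⋂ i, (A i)ᶜ) := by
  have := h.isProbabilityMeasure
  refine le_measure_iInter_of_forall_finset (fun i => (hA i).compl) fun u => ?_
  have hcompl : ∀ i, μ (A i)ᶜ = ENNReal.ofReal (1 - w i) := fun i => by
    rw [prob_compl_eq_one_sub (hA i), hμ, ENNReal.ofReal_sub _ (hw₀ i), ENNReal.ofReal_one]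
  calc ENNReal.ofReal (exp (-2 * ∑' i, w i))
      ≤ ENNReal.ofReal (exp (-2 * ∑ i ∈ u, w i)) := by
        have := hsum.sum_le_tsum u fun i _ => hw₀ i
        exact ENNReal.ofReal_le_ofReal (exp_le_exp.2 (by linarith))
    _ ≤ ENNReal.ofReal (∏ i ∈ u, (1 - w i)) :=
        ENNReal.ofReal_le_ofReal (u.exp_neg_two_mul_sum_le_prod_one_sub hw₀ hw)
    _ = μ (⋂ i ∈ u, (A i)ᶜ) := by
        rw [h.measure_biInter_compl, ENNReal.ofReal_prod_of_nonneg fun i _ => by linarith [hw i]]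
        exact Finset.prod_congr rfl fun i _ => (hcompl i).symm

theorem measure_zero_or_one_of_measurableSet_limsup_comap_atTop {β : Type*} [Preorder β]
    [IsDirectedOrder β] [NoMaxOrder β] {s : ι → MeasurableSpace Ω} (h_le : ∀ i, s i ≤ ‹_›)
    (h_indep : iIndep s μ) (g : ι → β) {t : Set Ω}
    (ht : MeasurableSet[limsup s (comap g atTop)] t) : μ t = 0 ∨ μ t = 1 := by
  refine measure_zero_or_one_of_measurableSet_limsup h_le h_indep
    (p := fun u => ∃ b, u ⊆ g ⁻¹' Iio b) (ns := fun b => g ⁻¹' Iio b) ?_ ?_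
    (fun b => ⟨b, subset_rfl⟩) (fun i => (exists_gt (g i)).imp fun _ => id) ht
  · rintro u ⟨b, hb⟩
    exact mem_comap.2 ⟨Ici b, Ici_mem_atTop b, fun i hi hu => not_lt_of_ge hi (hb hu)⟩
  · exact Monotone.directed_le fun b b' hbb' => preimage_mono (Iio_subset_Iio hbb')

end ProbabilityTheory

end Measure

namespace LongRangePercolation

variable {Ω : Type*}

def IsCutPoint (E : ℤ × ℤ → Set Ω) (ω : Ω) (k : ℤ) : Prop :=
  ∀ i j : ℤ, i < k → k < j → ω ∉ E (i, j)

def crossingEdge (k : ℤ) (ab : ℕ × ℕ) : ℤ × ℤ := (k - 1 - ab.1, k + 1 + ab.2)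

lemma crossingEdge_injective (k : ℤ) : Function.Injective (crossingEdge k) := by
  rintro ⟨a, b⟩ ⟨a', b'⟩ h
  simp only [crossingEdge, Prod.mk.injEq] at h
  ext <;> omega

lemma setOf_isCutPoint_eq_iInter (E : ℤ × ℤ → Set Ω) (k : ℤ) :
    {ω | IsCutPoint E ω k} = ⋂ ab, (E (crossingEdge k ab))ᶜ := by
  ext ω
  simp only [IsCutPoint, mem_ofPred_eq, mem_iInter, mem_compl_iff]
  refine ⟨fun h ab => h (k - 1 - ab.1) (k + 1 + ab.2) (by omega) (by omega), fun h i j hi hj => ?_⟩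
  have := h ((k - 1 - i).toNat, (j - k - 1).toNat)
  simp only [crossingEdge] at this
  rwa [Int.toNat_of_nonneg (by omega), Int.toNat_of_nonneg (by omega),
    show k - 1 - (k - 1 - i) = i by ring, show k + 1 + (j - k - 1) = j by ring] at this

def reflectEdge (p : ℤ × ℤ) : ℤ × ℤ := (-p.2, -p.1)

lemma reflectEdge_involutive : Function.Involutive reflectEdge := fun p => by
  simp [reflectEdge]

lemma isCutPoint_comp_reflectEdge {E : ℤ × ℤ → Set Ω} {ω : Ω} {k : ℤ} :
    IsCutPoint (E ∘ reflectEdge) ω k ↔ IsCutPoint E ω (-k) := by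
  refine ⟨fun h i j hi hj => ?_, fun h i j hi hj => h (-j) (-i) (by omega) (by omega)⟩
  simpa [reflectEdge] using h (-j) (-i) (by omega) (by omega)

lemma measurableSet_setOf_isCutPoint {m : MeasurableSpace Ω} {E : ℤ × ℤ → Set Ω} {k : ℤ}
    (hE : ∀ p : ℤ × ℤ, k < p.2 → MeasurableSet[m] (E p)) :
    MeasurableSet[m] {ω | IsCutPoint E ω k} := by
  rw [setOf_isCutPoint_eq_iInter]
  exact .iInter fun ab => (hE _ (by simp [crossingEdge]; omega)).compl

lemma measurableSet_limsup_setOf_isCutPoint (E : ℤ × ℤ → Set Ω) :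
    MeasurableSet[limsup (fun p => MeasurableSpace.generateFrom {E p}) (comap Prod.snd atTop)]
      (limsup (fun k => {ω | IsCutPoint E ω k}) atTop) := by
  rw [(atTop_basis.comap Prod.snd).limsup_eq_iInf_iSup]
  simp only [MeasurableSpace.measurableSet_iInf]
  intro B _
  have hlimsup : limsup (fun k => {ω | IsCutPoint E ω k}) atTop =
      ⋂ i ∈ Ici B, ⋃ j ∈ Ici i, {ω | IsCutPoint E ω j} := by
    simp only [(atTop_basis' B).limsup_eq_iInf_iSup]; rfl
  rw [hlimsup]
  refine .biInter (to_countable _) fun i hi => .biUnion (to_countable _) fun j hj =>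
    measurableSet_setOf_isCutPoint fun p hp => ?_
  have hBp : B ≤ p.2 := (mem_Ici.1 hi).trans ((mem_Ici.1 hj).trans hp.le)
  exact le_iSup₂ (f := fun p (_ : p ∈ Prod.snd ⁻¹' Ici B) => MeasurableSpace.generateFrom {E p})
    p hBp _ (MeasurableSpace.measurableSet_generateFrom (mem_singleton _))

variable [MeasurableSpace Ω] {μ : Measure Ω} {E : ℤ × ℤ → Set Ω} {s : ℝ}

structure IsLongRangePercolation (μ : Measure Ω) (E : ℤ × ℤ → Set Ω) (s : ℝ) : Prop where
  measurableSet_edge : ∀ p, MeasurableSet (E p)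
  iIndepSet_edge : iIndepSet E μ
  measure_edge : ∀ p : ℤ × ℤ, p.1 < p.2 →
    μ (E p) = ENNReal.ofReal (|(p.1 : ℝ) - (p.2 : ℝ)| ^ (-s))

namespace IsLongRangePercolation

lemma measure_crossingEdge (h : IsLongRangePercolation μ E s) (k : ℤ) (ab : ℕ × ℕ) :
    μ (E (crossingEdge k ab)) = ENNReal.ofReal (((ab.1 : ℝ) + ab.2 + 2) ^ (-s)) := by
  rw [h.measure_edge _ (by simp [crossingEdge]; omega)]
  simp only [crossingEdge]
  push_cast
  rw [show (k : ℝ) - 1 - ab.1 - (k + 1 + ab.2) = -(ab.1 + ab.2 + 2) by ring, abs_neg,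
    abs_of_nonneg (by positivity)]

theorem ofReal_exp_le_measure_isCutPoint (h : IsLongRangePercolation μ E s) (hs : 2 < s)
    (k : ℤ) : ENNReal.ofReal (exp (-2 * ∑' ab : ℕ × ℕ, ((ab.1 : ℝ) + ab.2 + 2) ^ (-s))) ≤
      μ {ω | IsCutPoint E ω k} := by
  rw [setOf_isCutPoint_eq_iInter]
  exact (h.iIndepSet_edge.precomp (crossingEdge_injective k)).ofReal_exp_le_measure_iInter_compl
    (fun _ => h.measurableSet_edge _) (h.measure_crossingEdge k) (fun _ => by positivity)
    (fun ab => rpow_neg_add_add_two_le_half (by linarith) ab.1 ab.2)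
    (summable_rpow_neg_add_add_two hs)

theorem ae_frequently_isCutPoint_atTop (h : IsLongRangePercolation μ E s) (hs : 2 < s) :
    ∀ᵐ ω ∂μ, ∃ᶠ k in atTop, IsCutPoint E ω k := by
  have := h.iIndepSet_edge.isProbabilityMeasure
  set T := limsup (fun k => {ω | IsCutPoint E ω k}) atTop
  have h_le : ∀ p, MeasurableSpace.generateFrom {E p} ≤ ‹MeasurableSpace Ω› := fun p =>
    MeasurableSpace.generateFrom_le fun t ht => (mem_singleton_iff.1 ht) ▸ h.measurableSet_edge p
  have hT_tail := measurableSet_limsup_setOf_isCutPoint E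
  have hT : MeasurableSet T := limsup_le_iSup.trans (iSup_le h_le) _ hT_tail
  have hT_pos := le_measure_limsup_atTop (μ := μ)
    (fun k => measurableSet_setOf_isCutPoint fun p _ => h.measurableSet_edge p)
    (h.ofReal_exp_le_measure_isCutPoint hs)
  have hT_one : μ T = 1 := by
    refine (measure_zero_or_one_of_measurableSet_limsup_comap_atTop h_le
      ((iIndepSet_iff_iIndep _ _).1 h.iIndepSet_edge) Prod.snd hT_tail).resolve_left fun h0 => ?_
    rw [h0, nonpos_iff_eq_zero, ENNReal.ofReal_eq_zero] at hT_pos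
    exact (exp_pos _).not_ge hT_pos
  have hT_ae : ∀ᵐ ω ∂μ, ω ∈ T :=
    (ae_mem_iff_measure_eq hT.nullMeasurableSet).2 (by rw [hT_one, measure_univ])
  filter_upwards [hT_ae] with ω hω using mem_limsup_iff_frequently_mem.1 hω

lemma comp_reflectEdge (h : IsLongRangePercolation μ E s) :
    IsLongRangePercolation μ (E ∘ reflectEdge) s where
  measurableSet_edge p := h.measurableSet_edge _
  iIndepSet_edge := h.iIndepSet_edge.precomp reflectEdge_involutive.injective
  measure_edge p hp := by
    rw [Function.comp_apply, h.measure_edge _ (by simp only [reflectEdge]; omega)]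
    simp only [reflectEdge, Int.cast_neg]
    rw [neg_sub_neg, abs_sub_comm]

end IsLongRangePercolation

end LongRangePercolation

open LongRangePercolation

theorem infinitely_many_cutpoints_general (s : ℝ) (hs : 2 < s)
    {Ω : Type*} [MeasurableSpace Ω] (μ : Measure Ω)
    (E : ℤ × ℤ → Set Ω) (hmeas : ∀ p, MeasurableSet (E p))
    (hindep : iIndepSet E μ)
    (hprob : ∀ p : ℤ × ℤ, p.1 < p.2 →
      μ (E p) = ENNReal.ofReal (|(p.1 : ℝ) - (p.2 : ℝ)| ^ (-s))) :
    ∀ᵐ ω ∂μ, ∀ m : ℤ,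
      (∃ k : ℤ, m < k ∧ ∀ i j : ℤ, i < k → k < j → ω ∉ E (i, j)) ∧
      (∃ k : ℤ, k < m ∧ ∀ i j : ℤ, i < k → k < j → ω ∉ E (i, j)) := by
  have h : IsLongRangePercolation μ E s := ⟨hmeas, hindep, hprob⟩
  filter_upwards [h.ae_frequently_isCutPoint_atTop hs,
    h.comp_reflectEdge.ae_frequently_isCutPoint_atTop hs] with ω hright hleft m
  obtain ⟨k, hmk, hk⟩ := frequently_atTop'.1 hright m
  obtain ⟨k', hmk', hk'⟩ := frequently_atTop'.1 hleft (-m)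
  exact ⟨⟨k, hmk, hk⟩, -k', by omega, isCutPoint_comp_reflectEdge.1 hk'⟩

/-- for `s > 2`, long range percolation on ℤ almost surely has
infinitely many cut-points, both to the left and to the right of any given vertex. -/
theorem infinitely_many_cutpoints (s : ℝ) (hs : 2 < s)
    {Ω : Type*} [MeasurableSpace Ω] (μ : Measure Ω) [IsProbabilityMeasure μ]
    (E : ℤ × ℤ → Set Ω) (hmeas : ∀ p, MeasurableSet (E p))
    (hindep : iIndepSet E μ)
    (hprob : ∀ p : ℤ × ℤ, p.1 < p.2 →
      μ (E p) = ENNReal.ofReal (|(p.1 : ℝ) - (p.2 : ℝ)| ^ (-s))) :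
    ∀ᵐ ω ∂μ, ∀ m : ℤ,
      (∃ k : ℤ, m < k ∧ ∀ i j : ℤ, i < k → k < j → ω ∉ E (i, j)) ∧
      (∃ k : ℤ, k < m ∧ ∀ i j : ℤ, i < k → k < j → ω ∉ E (i, j)) :=
  infinitely_many_cutpoints_general s hs μ E hmeas hindep hprob
end

section
/- Let G = (V, E) be a locally finite graph, α ≥ 1, and r : V → [0,∞). The collection of (r,α)-admissible partitions of V (partitions C such that for any distinct blocks C, C' we have d(C,C') > min(r(C), r(C'))^α, where r(C) = ∑_{x∈C} r(x) and d is graph distance between sets) is closed under arbitrary intersection: if (C_i)_{i∈I} are (r,α)-admissible partitions, then the partition defined by x ~ y iff x ~_{C_i} y for all i ∈ I is also (r,α)-admissible. -/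
open scoped ENNReal

/-- Graph distance between two sets of vertices, valued in `ℕ∞` (extended so that it is
`⊤` when one of the sets is empty or no pair is reachable). -/
noncomputable def graphSetDist {V : Type*} (G : SimpleGraph V) (A B : Set V) : ℕ∞ :=
  ⨅ (a : A) (b : B), G.edist a b

/-- The block of `x` in the partition (setoid) `S`. -/
def setoidBlock {V : Type*} (S : Setoid V) (x : V) : Set V := {y | S x y}

/-- Total weight of a set of vertices. -/
noncomputable def setWeight {V : Type*} (r : V → ℝ≥0∞) (A : Set V) : ℝ≥0∞ :=
  ∑' a : A, r a

/-- A partition `S` of the vertex set is `(r, α)`-admissible if any two distinct blocks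
`C ≠ C'` satisfy `d(C, C') > min(r(C), r(C'))^α`. -/
def IsAdmissible {V : Type*} (G : SimpleGraph V) (r : V → ℝ≥0∞) (α : ℝ) (S : Setoid V) :
    Prop :=
  ∀ x y : V, ¬ S x y →
    (min (setWeight r (setoidBlock S x)) (setWeight r (setoidBlock S y))) ^ α
      < (graphSetDist G (setoidBlock S x) (setoidBlock S y) : ℝ≥0∞)


lemma setWeight_mono {V : Type*} (r : V → ℝ≥0∞) {A B : Set V} (h : A ⊆ B) :
    setWeight r A ≤ setWeight r B := by
  unfold setWeight
  exact ENNReal.tsum_comp_le_tsum_of_injective (Set.inclusion_injective h)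
    (fun b : B => r b)

lemma graphSetDist_anti {V : Type*} (G : SimpleGraph V) {A A' B B' : Set V}
    (hA : A ⊆ A') (hB : B ⊆ B') : graphSetDist G A' B' ≤ graphSetDist G A B := by
  unfold graphSetDist
  refine le_iInf fun a => le_iInf fun b => ?_
  exact iInf_le_of_le (⟨a, hA a.2⟩ : A') (iInf_le_of_le (⟨b, hB b.2⟩ : B') le_rfl)

lemma isAdmissible_aux {V : Type*} (G : SimpleGraph V) (r : V → ℝ≥0∞) {α : ℝ}
    (hα : (0:ℝ) ≤ α) (T T' : Setoid V) (h : ∀ a b, T a b → T' a b) {x y : V}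
    (hxy : ¬ T' x y) (key : IsAdmissible G r α T') :
    (min (setWeight r (setoidBlock T x)) (setWeight r (setoidBlock T y))) ^ α
      < (graphSetDist G (setoidBlock T x) (setoidBlock T y) : ℝ≥0∞) := by
  have hbx : setoidBlock T x ⊆ setoidBlock T' x := fun z hz => h x z hz
  have hby : setoidBlock T y ⊆ setoidBlock T' y := fun z hz => h y z hz
  calc (min (setWeight r (setoidBlock T x)) (setWeight r (setoidBlock T y))) ^ α
      ≤ (min (setWeight r (setoidBlock T' x)) (setWeight r (setoidBlock T' y))) ^ α :=
        ENNReal.rpow_le_rpow (min_le_min (setWeight_mono r hbx) (setWeight_mono r hby)) hα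
    _ < (graphSetDist G (setoidBlock T' x) (setoidBlock T' y) : ℝ≥0∞) := key x y hxy
    _ ≤ _ := by exact_mod_cast ENat.toENNReal_le.mpr (graphSetDist_anti G hbx hby)

/-- the collection of `(r, α)`-admissible partitions is closed under
arbitrary intersection. -/
theorem isAdmissible_iInter {V : Type*} (G : SimpleGraph V) [G.LocallyFinite]
    (r : V → ℝ≥0∞) (α : ℝ) (hα : 1 ≤ α)
    {I : Type*} (S : I → Setoid V) (hS : ∀ i, IsAdmissible G r α (S i)) :
    IsAdmissible G r α
      ⟨fun x y => ∀ i, S i x y,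
        ⟨fun x i => (S i).refl x,
         fun h i => (S i).symm (h i),
         fun h h' i => (S i).trans (h i) (h' i)⟩⟩ := by
  intro x y hxy
  obtain ⟨i, hi⟩ := not_forall.mp hxy
  refine isAdmissible_aux G r (le_trans zero_le_one hα) _ (S i) ?_ hi (hS i)
  exact fun a b hab => hab i
end
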